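/- arXiv:math/0608239 — 3 statements merged into one kernel-verified Lean document; each statement's English description precedes it below -/
import Mathlib

section
/- Let (a_n, b_n)_{n≥1} be i.i.d. random variables with a_n ∈ GL(d,ℝ), b_n ∈ ℝ^d, satisfying E(log⁺‖a_1‖) < ∞, E(log⁺‖b_1‖) < ∞, and suppose the top Lyapunov exponent α = lim_n (1/n) E(log‖a_1⋯a_n‖) is strictly negative. Then the random series z = Σ_{k=0}^∞ a_1⋯a_k b_{k+1} converges almost surely. -/
open Filter MeasureTheory ProbabilityTheory Matrix
open scoped Matrix.Norms.L2Operator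

noncomputable instance matMS (d : ℕ) : MeasurableSpace (Matrix (Fin d) (Fin d) ℝ) :=
  inferInstanceAs (MeasurableSpace (Fin d → Fin d → ℝ))

/-- The product `a_1 ⋯ a_n` of the first `n` random matrices. -/
noncomputable def matProd {d : ℕ} {Ω : Type*} (A : ℕ → Ω → Matrix (Fin d) (Fin d) ℝ)
    (n : ℕ) (ω : Ω) : Matrix (Fin d) (Fin d) ℝ :=
  ((List.range n).map (fun i => A (i + 1) ω)).prod

/-!
Fix a block length `n` with `E log‖a_1⋯a_n‖ < 0`. Cutting `a_1⋯a_m` into `⌊m/n⌋` blocks of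
length `n` and fewer than `n` remaining factors, submultiplicativity of the norm gives
`log‖a_1⋯a_m‖ ≤ ∑_{j < ⌊m/n⌋} Y_j + ∑_{⌊m/n⌋n ≤ i < m} log⁺‖a_{i+1}‖`, where `Y_j` is the
log-norm of the `j`-th block product. The `Y_j` are i.i.d., so by the strong law of large
numbers (applied to the `Y_j`, to `log⁺‖a_i‖` and to `log⁺‖b_i‖`) almost surely
`log‖a_1⋯a_m‖ + log⁺‖b_{m+1}‖ ≤ m E(Y_0)/n + o(m)`, and the terms of the series decay
geometrically.
-/

open Topology Real Finset

lemma List.ofFn_eq_map_range {α : Type*} (f : ℕ → α) (n : ℕ) :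
    List.ofFn (fun t : Fin n => f t) = (List.range n).map f := by
  rw [List.ofFn_eq_map, ← List.map_coe_finRange_eq_range, List.map_map]
  rfl

lemma List.prod_range_add_map {M : Type*} [Monoid M] (g : ℕ → M) (a b : ℕ) :
    ((List.range (a + b)).map g).prod
      = ((List.range a).map g).prod * ((List.range b).map fun i => g (a + i)).prod := by
  rw [List.range_add, List.map_append, List.prod_append, List.map_map]
  rfl

lemma List.prod_range_mul_map {M : Type*} [Monoid M] (g : ℕ → M) (q n : ℕ) :
    ((List.range (q * n)).map g).prod
      = ((List.range q).map fun j => ((List.range n).map fun i => g (j * n + i)).prod).prod := by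
  induction q with
  | zero => simp
  | succ q ih => rw [add_mul, one_mul, List.prod_range_add_map, ih, List.prod_range_succ]

section Averages

variable {S : ℕ → ℝ} {μ : ℝ}

lemma tendsto_comp_div_of_tendsto_div (hS : Tendsto (fun k : ℕ => S k / k) atTop (𝓝 μ))
    {φ : ℕ → ℕ} {c : ℝ} (hφ : Tendsto φ atTop atTop)
    (hφc : Tendsto (fun m : ℕ => (φ m : ℝ) / m) atTop (𝓝 c)) :
    Tendsto (fun m : ℕ => S (φ m) / m) atTop (𝓝 (μ * c)) := by
  refine ((hS.comp hφ).mul hφc).congr' ?_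
  filter_upwards [hφ.eventually_ne_atTop 0] with m hm
  have : (φ m : ℝ) ≠ 0 := by exact_mod_cast hm
  simp only [Function.comp_apply]
  field_simp

lemma tendsto_succ_div_self : Tendsto (fun m : ℕ => ((m + 1 : ℕ) : ℝ) / m) atTop (𝓝 1) := by
  have := (tendsto_const_nhds (x := (1 : ℝ))).add tendsto_one_div_atTop_nhds_zero_nat
  rw [add_zero] at this
  refine this.congr' ?_
  filter_upwards [eventually_ne_atTop 0] with m hm
  have : (m : ℝ) ≠ 0 := by exact_mod_cast hm
  push_cast
  field_simp

lemma tendsto_nat_div_div_self {n : ℕ} (hn : 0 < n) :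
    Tendsto (fun m : ℕ => ((m / n : ℕ) : ℝ) / m) atTop (𝓝 (1 / n)) := by
  have hn' : (0 : ℝ) < n := by exact_mod_cast hn
  have h := (tendsto_nat_floor_div_atTop.comp
    ((tendsto_natCast_atTop_atTop (R := ℝ)).atTop_div_const hn')).div_const (n : ℝ)
  refine h.congr' ?_
  filter_upwards [eventually_ne_atTop 0] with m hm
  have : (m : ℝ) ≠ 0 := by exact_mod_cast hm
  simp only [Function.comp_apply, Nat.floor_div_eq_div]
  field_simp

lemma tendsto_sub_div_of_tendsto_div (hS : Tendsto (fun k : ℕ => S k / k) atTop (𝓝 μ)) :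
    Tendsto (fun m : ℕ => (S (m + 1) - S m) / m) atTop (𝓝 0) := by
  have h := (tendsto_comp_div_of_tendsto_div hS (tendsto_add_atTop_nat 1)
    tendsto_succ_div_self).sub hS
  rw [mul_one, sub_self] at h
  simpa only [sub_div] using h

lemma tendsto_block_div_of_tendsto_div (hS : Tendsto (fun k : ℕ => S k / k) atTop (𝓝 μ))
    {n : ℕ} (hn : 0 < n) : Tendsto (fun m : ℕ => S (m / n * n) / m) atTop (𝓝 μ) := by
  have hn' : (n : ℝ) ≠ 0 := by exact_mod_cast hn.ne'
  have hblock : Tendsto (fun k : ℕ => S (k * n) / k) atTop (𝓝 (μ * n)) := by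
    refine tendsto_comp_div_of_tendsto_div hS (tendsto_id.atTop_mul_const' hn)
      (tendsto_const_nhds.congr' ?_)
    filter_upwards [eventually_ne_atTop 0] with k hk
    have : (k : ℝ) ≠ 0 := by exact_mod_cast hk
    push_cast
    field_simp
  have h := tendsto_comp_div_of_tendsto_div hblock (Nat.tendsto_div_const_atTop hn.ne')
    (tendsto_nat_div_div_self hn)
  rwa [mul_assoc, mul_one_div_cancel hn', mul_one] at h

end Averages

lemma summable_of_norm_le_exp {E : Type*} [NormedAddCommGroup E] [CompleteSpace E]
    {f : ℕ → E} {u : ℕ → ℝ} {C μ : ℝ} (hf : ∀ m, ‖f m‖ ≤ C * exp (u m))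
    (hu : Tendsto (fun m : ℕ => u m / m) atTop (𝓝 μ)) (hμ : μ < 0) : Summable f := by
  have hc : μ < μ / 2 := by linarith
  have hgeom : Summable fun m : ℕ => C * exp (μ / 2) ^ m :=
    (summable_geometric_of_lt_one (exp_pos _).le (exp_lt_one_iff.2 (by linarith))).mul_left C
  refine hgeom.of_norm_bounded_eventually ?_
  rw [Nat.cofinite_eq_atTop]
  filter_upwards [hu.eventually_lt_const hc, eventually_gt_atTop 0] with m hm hm0
  have hC : 0 ≤ C := (mul_nonneg_iff_of_pos_right (exp_pos _)).1 ((norm_nonneg _).trans (hf 0))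
  have hm' : (0 : ℝ) < m := by exact_mod_cast hm0
  calc ‖f m‖ ≤ C * exp (u m) := hf m
    _ ≤ C * exp (μ / 2 * m) := by gcongr; exact ((div_lt_iff₀ hm').1 hm).le
    _ = C * exp (μ / 2) ^ m := by rw [← exp_nat_mul, mul_comm (m : ℝ)]

section NormedRing

variable {R : Type*} [NormedRing R] [NormOneClass R]

-- `‖x‖ ≤ exp (log ‖x‖)` holds also at `x = 0`, where `log 0 = 0`.
lemma norm_prod_range_le_exp_sum_log (g : ℕ → R) (n : ℕ) :
    ‖((List.range n).map g).prod‖ ≤ exp (∑ i ∈ range n, log ‖g i‖) := by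
  induction n with
  | zero => simp
  | succ n ih =>
    rw [List.prod_range_succ, sum_range_succ, exp_add]
    exact (norm_mul_le _ _).trans
      (mul_le_mul ih (le_exp_log _) (norm_nonneg _) (exp_pos _).le)

lemma norm_prod_range_le_exp_blocks (g : ℕ → R) (n m : ℕ) :
    ‖((List.range m).map g).prod‖ ≤
      exp (∑ j ∈ range (m / n), log ‖((List.range n).map fun i => g (j * n + i)).prod‖
        + ∑ i ∈ Ico (m / n * n) m, log ‖g i‖) := by
  obtain ⟨r, hr⟩ := Nat.exists_eq_add_of_le (Nat.div_mul_le_self m n)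
  conv_lhs => rw [hr, List.prod_range_add_map, List.prod_range_mul_map]
  rw [sum_Ico_eq_sum_range, show m - m / n * n = r by omega, exp_add]
  exact (norm_mul_le _ _).trans (mul_le_mul (norm_prod_range_le_exp_sum_log _ _)
    (norm_prod_range_le_exp_sum_log _ _) (norm_nonneg _) (exp_pos _).le)

end NormedRing

lemma Matrix.exists_norm_mulVec_le (𝕜 : Type*) [RCLike 𝕜] (m n : Type*) [Fintype m]
    [Fintype n] [DecidableEq n] :
    ∃ C, 0 ≤ C ∧ ∀ (M : Matrix m n 𝕜) (v : n → 𝕜), ‖M *ᵥ v‖ ≤ C * (‖M‖ * ‖v‖) := by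
  let e : EuclideanSpace 𝕜 m →L[𝕜] (m → 𝕜) := EuclideanSpace.equiv m 𝕜
  let e' : (n → 𝕜) →L[𝕜] EuclideanSpace 𝕜 n := (EuclideanSpace.equiv n 𝕜).symm
  refine ⟨‖e‖ * ‖e'‖, by positivity, fun M v => ?_⟩
  calc ‖M *ᵥ v‖ = ‖e ((EuclideanSpace.equiv m 𝕜).symm (M *ᵥ v))‖ := rfl
    _ ≤ ‖e‖ * (‖M‖ * (‖e'‖ * ‖v‖)) := by
      grw [e.le_opNorm, M.l2_opNorm_mulVec,
        show ‖WithLp.toLp 2 v‖ ≤ ‖e'‖ * ‖v‖ from e'.le_opNorm v]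
    _ = _ := by ring

lemma summable_list_prod_mulVec {𝕜 m : Type*} [RCLike 𝕜] [Fintype m] [DecidableEq m]
    [Nonempty m] (a : ℕ → Matrix m m 𝕜) (b : ℕ → m → 𝕜) {n : ℕ} (hn : 0 < n)
    {μY μa μb : ℝ}
    (hY : Tendsto (fun k : ℕ => (∑ j ∈ range k,
      log ‖(List.ofFn fun t : Fin n => a (j * n + t)).prod‖) / k) atTop (𝓝 μY))
    (ha : Tendsto (fun k : ℕ => (∑ i ∈ range k, max (log ‖a i‖) 0) / k) atTop (𝓝 μa))
    (hb : Tendsto (fun k : ℕ => (∑ i ∈ range k, max (log ‖b i‖) 0) / k) atTop (𝓝 μb))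
    (hμY : μY < 0) :
    Summable fun k => ((List.range k).map a).prod *ᵥ b k := by
  set SY := fun k => ∑ j ∈ range k, log ‖(List.ofFn fun t : Fin n => a (j * n + t)).prod‖
  set Sa := fun k => ∑ i ∈ range k, max (log ‖a i‖) 0
  set Sb := fun k => ∑ i ∈ range k, max (log ‖b i‖) 0
  have hprod (k : ℕ) :
      ‖((List.range k).map a).prod‖ ≤ exp (SY (k / n) + (Sa k - Sa (k / n * n))) := by
    refine (norm_prod_range_le_exp_blocks a n k).trans
      (exp_le_exp.2 (add_le_add (le_of_eq ?_) ?_))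
    · exact sum_congr rfl fun j _ => by rw [← List.ofFn_eq_map_range]
    · rw [← sum_Ico_eq_sub _ (Nat.div_mul_le_self k n)]
      exact sum_le_sum fun i _ => le_max_left _ _
  have hvec (k : ℕ) : ‖b k‖ ≤ exp (Sb (k + 1) - Sb k) := by
    rw [show Sb (k + 1) - Sb k = max (log ‖b k‖) 0 from sum_range_succ_sub_sum _]
    exact (le_exp_log _).trans (exp_le_exp.2 (le_max_left _ _))
  obtain ⟨C, hC, hmulVec⟩ := Matrix.exists_norm_mulVec_le 𝕜 m m
  refine summable_of_norm_le_exp (C := C)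
    (u := fun k => SY (k / n) + (Sa k - Sa (k / n * n)) + (Sb (k + 1) - Sb k)) (fun k => ?_) ?_
    (mul_neg_of_neg_of_pos hμY (one_div_pos.2 (Nat.cast_pos.2 hn)))
  · calc _ ≤ C * (‖((List.range k).map a).prod‖ * ‖b k‖) := hmulVec _ _
      _ ≤ _ := by grw [hprod, hvec, ← exp_add]
  · have h := ((tendsto_comp_div_of_tendsto_div hY (Nat.tendsto_div_const_atTop hn.ne')
      (tendsto_nat_div_div_self hn)).add (ha.sub (tendsto_block_div_of_tendsto_div ha hn))).add
      (tendsto_sub_div_of_tendsto_div hb)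
    rw [sub_self, add_zero, add_zero] at h
    simpa only [add_div, sub_div] using h

namespace ProbabilityTheory

variable {Ω β : Type*} [MeasurableSpace Ω] [MeasurableSpace β] {μ : Measure Ω}
  {X : ℕ → Ω → β}

def seqBlock (X : ℕ → Ω → β) (n j : ℕ) (ω : Ω) (t : Fin n) : β := X (j * n + t) ω

lemma measurable_seqBlock (hX : ∀ i, Measurable (X i)) (n j : ℕ) :
    Measurable (seqBlock X n j) :=
  measurable_pi_lambda _ fun _ => hX _

lemma iIndepFun.indepFun_seqBlock (hX : ∀ i, Measurable (X i)) (h : iIndepFun X μ) (n : ℕ)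
    {i j : ℕ} (hij : i ≠ j) : IndepFun (seqBlock X n i) (seqBlock X n j) μ := by
  classical
  let S := Finset.univ.image fun t : Fin n => i * n + t
  let T := Finset.univ.image fun t : Fin n => j * n + t
  have hST : Disjoint S T := by
    simp only [S, T, Finset.disjoint_left, Finset.mem_image, Finset.mem_univ, true_and]
    rintro _ ⟨t, rfl⟩ ⟨t', ht'⟩
    rcases hij.lt_or_gt with hlt | hlt <;> nlinarith [t.2, t'.2]
  exact (h.indepFun_finset S T hST hX).comp
    (φ := fun v (t : Fin n) => v ⟨i * n + t, by simp [S]⟩)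
    (ψ := fun v (t : Fin n) => v ⟨j * n + t, by simp [T]⟩)
    (measurable_pi_lambda _ fun _ => measurable_pi_apply _)
    (measurable_pi_lambda _ fun _ => measurable_pi_apply _)

lemma iIndepFun.map_seqBlock [IsProbabilityMeasure μ] (hX : ∀ i, Measurable (X i))
    (h : iIndepFun X μ) (hident : ∀ i, IdentDistrib (X i) (X 0) μ μ) (n j : ℕ) :
    μ.map (seqBlock X n j) = Measure.pi fun _ : Fin n => μ.map (X 0) := by
  have hinj : Function.Injective fun t : Fin n => j * n + t := fun t t' htt' =>
    Fin.ext (by simpa using htt')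
  rw [show seqBlock X n j = fun ω (t : Fin n) => X (j * n + t) ω from rfl,
    (iIndepFun_iff_map_fun_eq_pi_map fun _ => (hX _).aemeasurable).1 (h.precomp hinj)]
  simp_rw [(hident _).map_eq]

lemma iIndepFun.identDistrib_seqBlock [IsProbabilityMeasure μ] (hX : ∀ i, Measurable (X i))
    (h : iIndepFun X μ) (hident : ∀ i, IdentDistrib (X i) (X 0) μ μ) (n j : ℕ) :
    IdentDistrib (seqBlock X n j) (seqBlock X n 0) μ μ where
  aemeasurable_fst := (measurable_seqBlock hX n j).aemeasurable
  aemeasurable_snd := (measurable_seqBlock hX n 0).aemeasurable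
  map_eq := by rw [h.map_seqBlock hX hident, h.map_seqBlock hX hident]

lemma strong_law_ae_comp (hindep : Pairwise fun i j => IndepFun (X i) (X j) μ)
    (hident : ∀ i, IdentDistrib (X i) (X 0) μ μ) {g : β → ℝ} (hg : Measurable g)
    (hint : Integrable (fun ω => g (X 0 ω)) μ) :
    ∀ᵐ ω ∂μ, Tendsto (fun n : ℕ => (∑ i ∈ range n, g (X i ω)) / n) atTop
      (𝓝 (∫ ω, g (X 0 ω) ∂μ)) :=
  strong_law_ae_real (fun i ω => g (X i ω)) hint (fun _ _ hij => (hindep hij).comp hg hg)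
    fun i => (hident i).comp hg

end ProbabilityTheory

-- The topology of the L2 operator norm is the product topology, whose Borel σ-algebra is `matMS`.
instance (d : ℕ) : BorelSpace (Matrix (Fin d) (Fin d) ℝ) :=
  inferInstanceAs (BorelSpace (Fin d → Fin d → ℝ))

instance (d : ℕ) : SecondCountableTopology (Matrix (Fin d) (Fin d) ℝ) :=
  inferInstanceAs (SecondCountableTopology (Fin d → Fin d → ℝ))

lemma measurable_log_norm_list_prod_ofFn {R : Type*} [NormedRing R] [MeasurableSpace R]
    [BorelSpace R] [SecondCountableTopology R] (n : ℕ) :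
    Measurable fun v : Fin n → R => log ‖(List.ofFn v).prod‖ := by
  refine measurable_log.comp (Continuous.measurable ?_)
  simp only [List.ofFn_eq_map]
  exact (continuous_list_prod _ fun t _ => continuous_apply t).norm

lemma exists_pos_neg_of_tendsto_one_div_mul {a : ℕ → ℝ} {α : ℝ}
    (h : Tendsto (fun n : ℕ => (1 / (n : ℝ)) * a n) atTop (𝓝 α)) (hα : α < 0) :
    ∃ n, 0 < n ∧ a n < 0 := by
  obtain ⟨n, hneg, hn⟩ := ((h.eventually_lt_const hα).and (eventually_gt_atTop 0)).exists
  exact ⟨n, hn, neg_of_mul_neg_right hneg (by positivity)⟩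

theorem stmt2_general {d : ℕ} {Ω : Type*} [MeasureSpace Ω]
    [IsProbabilityMeasure (volume : Measure Ω)]
    (A : ℕ → Ω → Matrix (Fin d) (Fin d) ℝ) (B : ℕ → Ω → (Fin d → ℝ))
    (hmeas : ∀ n, Measurable (fun ω => (A n ω, B n ω)))
    (hindep : iIndepFun (fun n ω => (A n ω, B n ω)) volume)
    (hident : ∀ n, IdentDistrib (fun ω => (A n ω, B n ω)) (fun ω => (A 1 ω, B 1 ω))
      volume volume)
    (hA : Integrable (fun ω => max (Real.log ‖A 1 ω‖) 0) volume)
    (hB : Integrable (fun ω => max (Real.log ‖B 1 ω‖) 0) volume)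
    (α : ℝ)
    (hα : Tendsto (fun n : ℕ =>
      (1 / (n : ℝ)) * ∫ ω, Real.log ‖matProd A n ω‖) atTop (nhds α))
    (hαneg : α < 0) :
    ∀ᵐ ω : Ω, ∃ L : Fin d → ℝ,
      Tendsto (fun N : ℕ => ∑ k ∈ Finset.range N, (matProd A k ω).mulVec (B (k + 1) ω))
        atTop (nhds L) := by
  rcases isEmpty_or_nonempty (Fin d) with hd | hd
  · exact ae_of_all _ fun ω => ⟨0, tendsto_const_nhds.congr fun N => Subsingleton.elim _ _⟩
  obtain ⟨n, hn, hneg⟩ := exists_pos_neg_of_tendsto_one_div_mul hα hαneg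
  set X : ℕ → Ω → Matrix (Fin d) (Fin d) ℝ × (Fin d → ℝ) :=
    fun i ω => (A (i + 1) ω, B (i + 1) ω)
  have hXmeas (i : ℕ) : Measurable (X i) := hmeas (i + 1)
  have hXindep : iIndepFun X volume := hindep.precomp (add_left_injective 1)
  have hXident (i : ℕ) : IdentDistrib (X i) (X 0) volume volume :=
    (hident (i + 1)).trans (hident 1).symm
  have hXpair : Pairwise fun i j => IndepFun (X i) (X j) volume :=
    fun _ _ hij => hXindep.indepFun hij
  have hY0 (ω : Ω) :
      log ‖(List.ofFn fun t => (seqBlock X n 0 ω t).1).prod‖ = log ‖matProd A n ω‖ := by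
    simp only [seqBlock, X, zero_mul, zero_add]
    rw [List.ofFn_eq_map_range (fun i => A (i + 1) ω)]
    rfl
  have hYint : Integrable fun ω => log ‖(List.ofFn fun t => (seqBlock X n 0 ω t).1).prod‖ := by
    simp_rw [hY0]
    -- a non-integrable function has Bochner integral `0`
    by_contra h
    exact hneg.ne (integral_undef h)
  filter_upwards [strong_law_ae_comp (fun _ _ hij => hXindep.indepFun_seqBlock hXmeas n hij)
      (hXindep.identDistrib_seqBlock hXmeas hXident n)
      ((measurable_log_norm_list_prod_ofFn n).comp
        (measurable_pi_lambda _ fun t => measurable_fst.comp (measurable_pi_apply t))) hYint,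
    strong_law_ae_comp (g := fun p => max (log ‖p.1‖) 0) hXpair hXident (by fun_prop) hA,
    strong_law_ae_comp (g := fun p => max (log ‖p.2‖) 0) hXpair hXident (by fun_prop) hB]
    with ω hY ha hb
  exact ⟨_, (summable_list_prod_mulVec (fun i => A (i + 1) ω) (fun i => B (i + 1) ω) hn hY ha hb
    (by simpa only [Function.comp_def, hY0] using hneg)).hasSum.tendsto_sum_nat⟩

/-- Let `(a_n, b_n)` be i.i.d. with `a_n ∈ GL(d,ℝ)`, `b_n ∈ ℝ^d`, with
`E(log⁺‖a_1‖) < ∞`, `E(log⁺‖b_1‖) < ∞` and negative top Lyapunov exponent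
`α = lim_n (1/n) E(log‖a_1⋯a_n‖) < 0`. Then the random series
`z = ∑_{k=0}^∞ a_1⋯a_k b_{k+1}` converges almost surely. -/
theorem stmt2 {d : ℕ} {Ω : Type*} [MeasureSpace Ω]
    [IsProbabilityMeasure (volume : Measure Ω)]
    (A : ℕ → Ω → Matrix (Fin d) (Fin d) ℝ) (B : ℕ → Ω → (Fin d → ℝ))
    (hinv : ∀ n, ∀ ω, IsUnit (A n ω))
    (hmeas : ∀ n, Measurable (fun ω => (A n ω, B n ω)))
    (hindep : iIndepFun (fun n ω => (A n ω, B n ω)) volume)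
    (hident : ∀ n, IdentDistrib (fun ω => (A n ω, B n ω)) (fun ω => (A 1 ω, B 1 ω))
      volume volume)
    (hA : Integrable (fun ω => max (Real.log ‖A 1 ω‖) 0) volume)
    (hB : Integrable (fun ω => max (Real.log ‖B 1 ω‖) 0) volume)
    (α : ℝ)
    (hα : Tendsto (fun n : ℕ =>
      (1 / (n : ℝ)) * ∫ ω, Real.log ‖matProd A n ω‖) atTop (nhds α))
    (hαneg : α < 0) :
    ∀ᵐ ω : Ω, ∃ L : Fin d → ℝ,
      Tendsto (fun N : ℕ => ∑ k ∈ Finset.range N, (matProd A k ω).mulVec (B (k + 1) ω))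
        atTop (nhds L) :=
  stmt2_general A B hmeas hindep hident hA hB α hα hαneg
end

section
/- Let (a_n, b_n) be i.i.d. with E(‖b_1‖^s) < ∞, and suppose k(s) = lim_n (E‖a_1⋯a_n‖^s)^{1/n} < 1 for some s ∈ (0, χ). Then the stationary solution z = Σ_{k=0}^∞ a_1⋯a_k b_{k+1} satisfies E(‖z‖^s) < ∞, using the inequality ‖Σ x_k‖^s ≤ max(1,s)·Σ‖x_k‖^s appropriately (for s ≤ 1, ‖Σ x_k‖^s ≤ Σ‖x_k‖^s; for s ≥ 1 use the triangle and Minkowski inequalities). -/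
open Filter MeasureTheory ProbabilityTheory Matrix ENNReal
open scoped Matrix.Norms.L2Operator

/-! The root test gives `E‖a_1⋯a_n‖^s ≤ r^n` for large `n` and some `r < 1`; since the `a_i` are
invertible and independent, finiteness of `E‖a_1⋯a_N‖^s` forces finiteness for every `k ≤ N`.
Independence of `a_1⋯a_k` and `b_{k+1}` bounds the `s`-th moment of the `k`-th term by a constant
times `E‖a_1⋯a_k‖^s`. With `q = min 1 (1/s)` the functional `f ↦ (E‖f‖^s)^q` is subadditive
(pointwise for `s ≤ 1`, Minkowski for `s ≥ 1`), so the partial sums have uniformly bounded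
`s`-th moments, and Fatou's lemma passes the bound to the limit `z`. -/

open scoped NNReal Topology

instance matBorelSpace (d : ℕ) : BorelSpace (Matrix (Fin d) (Fin d) ℝ) :=
  inferInstanceAs (BorelSpace (Fin d → Fin d → ℝ))

namespace ENNReal

theorem eventually_le_pow_of_tendsto_rpow_inv {c : ℕ → ℝ≥0∞} {l r : ℝ≥0∞}
    (hc : Tendsto (fun n : ℕ => c n ^ (1 / (n : ℝ))) atTop (𝓝 l)) (hlr : l < r) :
    ∀ᶠ n in atTop, c n ≤ r ^ n := by
  filter_upwards [hc.eventually_lt_const hlr, eventually_ge_atTop 1] with n hn hn1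
  have hn0 : (n : ℝ) ≠ 0 := by positivity
  calc c n = (c n ^ (1 / (n : ℝ))) ^ n := by
        rw [← rpow_natCast, ← rpow_mul, one_div_mul_cancel hn0, rpow_one]
    _ ≤ r ^ n := pow_le_pow_left₀ zero_le hn.le n

theorem tsum_ne_top_of_eventually_le_geometric {c : ℕ → ℝ≥0∞} {K r : ℝ≥0∞}
    (hc : ∀ k, c k ≠ ⊤) (hK : K ≠ ⊤) (hr : r < 1) (h : ∀ᶠ k in atTop, c k ≤ K * r ^ k) :
    ∑' k, c k ≠ ⊤ := by
  obtain ⟨N, hN⟩ := eventually_atTop.1 h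
  have htail : ∑' k, c (k + N) ≤ K * (1 - r)⁻¹ :=
    calc ∑' k, c (k + N) ≤ ∑' k, K * r ^ k :=
          ENNReal.tsum_le_tsum fun k => (hN _ (Nat.le_add_left N k)).trans
            (mul_le_mul_right (pow_le_pow_of_le_one zero_le hr.le (Nat.le_add_right k N)) K)
      _ = K * (1 - r)⁻¹ := by rw [ENNReal.tsum_mul_left, ENNReal.tsum_geometric]
  rw [← Summable.sum_add_tsum_nat_add' ENNReal.summable]
  refine add_ne_top.2 ⟨sum_ne_top.2 fun k _ => hc k, ne_top_of_le_ne_top ?_ htail⟩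
  exact mul_ne_top hK (inv_ne_top.2 (tsub_pos_of_lt hr).ne')

theorem tsum_rpow_ne_top_of_eventually_le_geometric {c : ℕ → ℝ≥0∞} {K r : ℝ≥0∞} {q : ℝ}
    (hq : 0 < q) (hc : ∀ k, c k ≠ ⊤) (hK : K ≠ ⊤) (hr : r < 1)
    (h : ∀ᶠ k in atTop, c k ≤ K * r ^ k) :
    ∑' k, c k ^ q ≠ ⊤ := by
  refine tsum_ne_top_of_eventually_le_geometric (fun k => rpow_ne_top_of_nonneg hq.le (hc k))
    (rpow_ne_top_of_nonneg hq.le hK) (rpow_lt_one hr hq) (h.mono fun k hk => ?_)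
  calc c k ^ q ≤ (K * r ^ k) ^ q := rpow_le_rpow hk hq.le
    _ = K ^ q * (r ^ q) ^ k := by
      rw [mul_rpow_of_nonneg _ _ hq.le, ← rpow_natCast, ← rpow_natCast, ← rpow_mul, ← rpow_mul,
        mul_comm q]

end ENNReal

section Moments

variable {Ω E ι : Type*} [MeasurableSpace Ω] {μ : Measure Ω} [NormedAddCommGroup E]

theorem enorm_sum_rpow_le {s : ℝ} (hs0 : 0 < s) (hs1 : s ≤ 1) (t : Finset ι) (x : ι → E) :
    ‖∑ i ∈ t, x i‖ₑ ^ s ≤ ∑ i ∈ t, ‖x i‖ₑ ^ s :=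
  Finset.le_sum_of_subadditive (fun y : E => ‖y‖ₑ ^ s) (by simp [hs0]) (fun y z =>
    (ENNReal.rpow_le_rpow (enorm_add_le y z) hs0.le).trans
      (ENNReal.rpow_add_le_add_rpow _ _ hs0.le hs1)) t x

theorem lintegral_enorm_sum_rpow_rpow_le {s : ℝ} (hs : 0 < s) (t : Finset ι) {f : ι → Ω → E}
    (hf : ∀ i ∈ t, AEStronglyMeasurable (f i) μ) :
    (∫⁻ ω, ‖∑ i ∈ t, f i ω‖ₑ ^ s ∂μ) ^ min 1 (1 / s) ≤
      ∑ i ∈ t, (∫⁻ ω, ‖f i ω‖ₑ ^ s ∂μ) ^ min 1 (1 / s) := by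
  rcases le_total s 1 with hs1 | hs1
  · have hq : min 1 (1 / s) = 1 := min_eq_left (one_le_one_div hs hs1)
    simp only [hq, ENNReal.rpow_one]
    calc ∫⁻ ω, ‖∑ i ∈ t, f i ω‖ₑ ^ s ∂μ ≤ ∫⁻ ω, ∑ i ∈ t, ‖f i ω‖ₑ ^ s ∂μ :=
          lintegral_mono fun ω => enorm_sum_rpow_le hs hs1 t _
      _ = ∑ i ∈ t, ∫⁻ ω, ‖f i ω‖ₑ ^ s ∂μ :=
          lintegral_finsetSum' t fun i hi => (hf i hi).enorm.pow_const s
  · have hq : min 1 (1 / s) = 1 / s := min_eq_right ((div_le_one hs).2 hs1)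
    have hMinkowski := eLpNorm'_sum_le hf hs1
    rw [Finset.sum_fn] at hMinkowski
    simpa only [hq, eLpNorm'_eq_lintegral_enorm] using hMinkowski

theorem lintegral_enorm_rpow_ne_top_of_tendsto_sum {s : ℝ} (hs : 0 < s) {f : ℕ → Ω → E}
    (hf : ∀ k, AEStronglyMeasurable (f k) μ) {Z : Ω → E}
    (hZ : ∀ᵐ ω ∂μ, Tendsto (fun N => ∑ k ∈ Finset.range N, f k ω) atTop (𝓝 (Z ω)))
    (hsum : ∑' k, (∫⁻ ω, ‖f k ω‖ₑ ^ s ∂μ) ^ min 1 (1 / s) ≠ ⊤) :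
    ∫⁻ ω, ‖Z ω‖ₑ ^ s ∂μ ≠ ⊤ := by
  set q := min 1 (1 / s)
  have hq : 0 < q := lt_min one_pos (one_div_pos.2 hs)
  set L := ∑' k, (∫⁻ ω, ‖f k ω‖ₑ ^ s ∂μ) ^ q
  have hpartial : ∀ N, ∫⁻ ω, ‖∑ k ∈ Finset.range N, f k ω‖ₑ ^ s ∂μ ≤ L ^ q⁻¹ := fun N =>
    (ENNReal.le_rpow_inv_iff hq).2 <| (lintegral_enorm_sum_rpow_rpow_le hs _ fun k _ => hf k).trans
      (ENNReal.sum_le_tsum _)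
  have hcont : Continuous fun x : E => ‖x‖ₑ ^ s :=
    ENNReal.continuous_rpow_const.comp continuous_enorm
  refine ne_top_of_le_ne_top (ENNReal.rpow_ne_top_of_nonneg (inv_nonneg.2 hq.le) hsum) ?_
  calc ∫⁻ ω, ‖Z ω‖ₑ ^ s ∂μ
      = ∫⁻ ω, liminf (fun N => ‖∑ k ∈ Finset.range N, f k ω‖ₑ ^ s) atTop ∂μ :=
        lintegral_congr_ae <| hZ.mono fun ω hω => ((hcont.tendsto _).comp hω).liminf_eq.symm
    _ ≤ liminf (fun N => ∫⁻ ω, ‖∑ k ∈ Finset.range N, f k ω‖ₑ ^ s ∂μ) atTop :=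
        lintegral_liminf_le' fun N =>
          (Finset.aestronglyMeasurable_fun_sum _ fun k _ => hf k).enorm.pow_const s
    _ ≤ L ^ q⁻¹ := liminf_le_of_frequently_le' (Frequently.of_forall hpartial)

end Moments

section Independence

variable {Ω ι β : Type*} [mβ : MeasurableSpace β] {X : ι → Ω → β}

theorem measurable_iSup_comap_comp {γ : Type*} [MeasurableSpace γ] {S : Set ι} {i : ι}
    (hi : i ∈ S) {φ : β → γ} (hφ : Measurable φ) :
    Measurable[⨆ j ∈ S, mβ.comap (X j)] fun ω => φ (X i ω) :=
  (hφ.comp (comap_measurable (X i))).mono (le_iSup₂ (f := fun j _ => mβ.comap (X j)) i hi) le_rfl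

theorem ProbabilityTheory.iIndepFun.lintegral_mul_eq_of_disjoint [MeasurableSpace Ω]
    {μ : Measure Ω} (hX : ∀ i, Measurable (X i)) (h : iIndepFun X μ) {S T : Set ι}
    (hST : Disjoint S T) {f g : Ω → ℝ≥0∞}
    (hf : Measurable[⨆ i ∈ S, mβ.comap (X i)] f) (hg : Measurable[⨆ i ∈ T, mβ.comap (X i)] g) :
    ∫⁻ ω, f ω * g ω ∂μ = (∫⁻ ω, f ω ∂μ) * ∫⁻ ω, g ω ∂μ :=
  lintegral_mul_eq_lintegral_mul_lintegral_of_independent_measurableSpace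
    (iSup₂_le fun i _ => (hX i).comap_le) (iSup₂_le fun i _ => (hX i).comap_le)
    (indep_iSup_of_disjoint (fun i => (hX i).comap_le) h hST) hf hg

end Independence

section MatrixNorm

variable {n : Type*} [Fintype n] [DecidableEq n]

theorem Matrix.enorm_le_enorm_mul_mul_enorm_inv (P : Matrix n n ℝ) {Q : Matrix n n ℝ}
    (hQ : IsUnit Q) : ‖P‖ₑ ≤ ‖P * Q‖ₑ * ‖Q⁻¹‖ₑ :=
  calc ‖P‖ₑ = ‖P * Q * Q⁻¹‖ₑ := by
        rw [Matrix.mul_nonsing_inv_cancel_right _ _ ((Matrix.isUnit_iff_isUnit_det Q).1 hQ)]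
    _ ≤ ‖P * Q‖ₑ * ‖Q⁻¹‖ₑ := by
        simpa only [enorm_eq_nnnorm, ← ENNReal.coe_mul, ENNReal.coe_le_coe] using
          nnnorm_mul_le (P * Q) Q⁻¹

-- Vectors carry the sup norm but matrices the `ℓ²`-operator norm, hence the constant.
theorem Matrix.exists_nnnorm_mulVec_le :
    ∃ C : ℝ≥0, ∀ (M : Matrix n n ℝ) (v : n → ℝ), ‖M *ᵥ v‖₊ ≤ C * (‖M‖₊ * ‖v‖₊) := by
  obtain ⟨C, hC⟩ : ∃ C : ℝ≥0, LipschitzWith C (WithLp.toLp 2 : (n → ℝ) → EuclideanSpace ℝ n) :=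
    ⟨_, PiLp.lipschitzWith_toLp 2 _⟩
  refine ⟨C, fun M v => ?_⟩
  calc ‖M *ᵥ v‖₊ ≤ ‖WithLp.toLp 2 (M *ᵥ v)‖₊ := by
        simpa using (PiLp.lipschitzWith_ofLp 2 (fun _ : n => ℝ)).nnorm_le_mul (by simp)
          (WithLp.toLp 2 (M *ᵥ v))
    _ ≤ ‖M‖₊ * ‖WithLp.toLp 2 v‖₊ := Matrix.l2_opNNNorm_mulVec M _
    _ ≤ ‖M‖₊ * (C * ‖v‖₊) := mul_le_mul_right (hC.nnorm_le_mul (by simp) v) _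
    _ = C * (‖M‖₊ * ‖v‖₊) := by ring

end MatrixNorm

theorem Matrix.measurable_nonsing_inv (d : ℕ) :
    Measurable fun M : Matrix (Fin d) (Fin d) ℝ => M⁻¹ := by
  simp only [Matrix.inv_def, Ring.inverse_eq_inv']
  fun_prop

section MatProd

variable {d : ℕ} {Ω : Type*} {A : ℕ → Ω → Matrix (Fin d) (Fin d) ℝ}

theorem matProd_add (k m : ℕ) (ω : Ω) :
    matProd A (k + m) ω = matProd A k ω * matProd (fun j => A (k + j)) m ω := by
  simp only [matProd, List.range_add, List.map_append, List.prod_append, List.map_map]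
  rfl

theorem matProd_succ (n : ℕ) (ω : Ω) : matProd A (n + 1) ω = matProd A n ω * A (n + 1) ω := by
  simp [matProd, List.range_succ]

theorem isUnit_matProd (hA : ∀ n ω, IsUnit (A n ω)) (n : ℕ) (ω : Ω) :
    IsUnit (matProd A n ω) :=
  List.prod_isUnit fun M hM => by
    obtain ⟨i, -, rfl⟩ := List.mem_map.1 hM
    exact hA _ ω

theorem measurable_matProd {m : MeasurableSpace Ω} {n : ℕ}
    (hA : ∀ i, 0 < i → i ≤ n → Measurable[m] (A i)) : Measurable[m] (matProd A n) := by
  induction n with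
  | zero => exact measurable_const
  | succ n ih =>
    have hsucc : matProd A (n + 1) = fun ω => matProd A n ω * A (n + 1) ω :=
      funext (matProd_succ n)
    rw [hsucc]
    exact (ih fun i hi hin => hA i hi (by omega)).mul (hA (n + 1) n.succ_pos le_rfl)

end MatProd

section RandomMatrixProducts

variable {d : ℕ} {Ω : Type*} [MeasurableSpace Ω] {μ : Measure Ω}
  {A : ℕ → Ω → Matrix (Fin d) (Fin d) ℝ}

/-- Since `P_N = P_k Q` with `Q = a_{k+1} ⋯ a_N` invertible and independent of `P_k`, we get
`E‖P_k‖^s · E‖Q⁻¹‖^{-s} ≤ E‖P_N‖^s`, and the second factor is positive. -/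
theorem lintegral_enorm_matProd_rpow_ne_top_of_le [NeZero μ] (hA : ∀ n, Measurable (A n))
    (hindep : iIndepFun A μ) (hinv : ∀ n ω, IsUnit (A n ω)) {s : ℝ} (hs : 0 ≤ s) {k N : ℕ}
    (hkN : k ≤ N) (hN : ∫⁻ ω, ‖matProd A N ω‖ₑ ^ s ∂μ ≠ ⊤) :
    ∫⁻ ω, ‖matProd A k ω‖ₑ ^ s ∂μ ≠ ⊤ := by
  set Q := matProd (fun j => A (k + j)) (N - k)
  set Y : Ω → ℝ≥0∞ := fun ω => (‖(Q ω)⁻¹‖ₑ ^ s)⁻¹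
  have hY : ∀ ω, Y ω ≠ 0 := fun ω =>
    ENNReal.inv_ne_zero.2 (ENNReal.rpow_ne_top_of_nonneg hs enorm_ne_top)
  have hle : ∀ ω, ‖matProd A k ω‖ₑ ^ s * Y ω ≤ ‖matProd A N ω‖ₑ ^ s := fun ω => by
    refine ENNReal.div_le_of_le_mul ?_
    have hsplit : matProd A N ω = matProd A k ω * Q ω := by
      rw [← matProd_add, Nat.add_sub_cancel' hkN]
    rw [hsplit, ← ENNReal.mul_rpow_of_nonneg _ _ hs]
    exact ENNReal.rpow_le_rpow (Matrix.enorm_le_enorm_mul_mul_enorm_inv _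
      (isUnit_matProd (fun n => hinv (k + n)) (N - k) ω)) hs
  have hQ : Measurable[⨆ i ∈ Set.Ioi k, MeasurableSpace.comap (A i) inferInstance] Q :=
    measurable_matProd fun i hi _ =>
      measurable_iSup_comap_comp (X := A) (show k < k + i by omega) measurable_id
  have hPk : Measurable[⨆ i ∈ Set.Iic k, MeasurableSpace.comap (A i) inferInstance]
      (matProd A k) :=
    measurable_matProd fun i _ hik =>
      measurable_iSup_comap_comp (X := A) (show i ∈ Set.Iic k from hik) measurable_id
  have hY_meas : Measurable[⨆ i ∈ Set.Ioi k, MeasurableSpace.comap (A i) inferInstance] Y :=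
    ((measurable_enorm.pow_const s).comp ((Matrix.measurable_nonsing_inv d).comp hQ)).inv
  have hprod : ∫⁻ ω, ‖matProd A k ω‖ₑ ^ s * Y ω ∂μ =
      (∫⁻ ω, ‖matProd A k ω‖ₑ ^ s ∂μ) * ∫⁻ ω, Y ω ∂μ :=
    hindep.lintegral_mul_eq_of_disjoint hA (Set.disjoint_left.2 fun i hi hi' =>
      (not_lt.2 (Set.mem_Iic.1 hi)) hi') ((measurable_enorm.pow_const s).comp hPk) hY_meas
  have hYint : ∫⁻ ω, Y ω ∂μ ≠ 0 := by
    rw [Ne, lintegral_eq_zero_iff (hY_meas.mono (iSup₂_le fun i _ => (hA i).comap_le) le_rfl)]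
    intro hY0
    obtain ⟨ω, hω⟩ := hY0.exists
    exact hY ω hω
  intro htop
  refine ne_top_of_le_ne_top hN (lintegral_mono hle) ?_
  rw [hprod, htop, ENNReal.top_mul hYint]

theorem exists_lintegral_enorm_matProd_mulVec_rpow_le {B : ℕ → Ω → (Fin d → ℝ)}
    (hmeas : ∀ n, Measurable fun ω => (A n ω, B n ω))
    (hindep : iIndepFun (fun n ω => (A n ω, B n ω)) μ)
    (hident : ∀ n, IdentDistrib (fun ω => (A n ω, B n ω)) (fun ω => (A 1 ω, B 1 ω)) μ μ)
    {s : ℝ} (hs : 0 ≤ s) (hb : ∫⁻ ω, ‖B 1 ω‖ₑ ^ s ∂μ ≠ ⊤) :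
    ∃ C ≠ ⊤, ∀ k, ∫⁻ ω, ‖matProd A k ω *ᵥ B (k + 1) ω‖ₑ ^ s ∂μ ≤
      C * ∫⁻ ω, ‖matProd A k ω‖ₑ ^ s ∂μ := by
  obtain ⟨C₀, hC₀⟩ := Matrix.exists_nnnorm_mulVec_le (n := Fin d)
  refine ⟨(C₀ : ℝ≥0∞) ^ s * ∫⁻ ω, ‖B 1 ω‖ₑ ^ s ∂μ,
    ENNReal.mul_ne_top (ENNReal.rpow_ne_top_of_nonneg hs ENNReal.coe_ne_top) hb, fun k => ?_⟩
  have hpoint : ∀ ω, ‖matProd A k ω *ᵥ B (k + 1) ω‖ₑ ^ s ≤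
      (C₀ : ℝ≥0∞) ^ s * (‖matProd A k ω‖ₑ ^ s * ‖B (k + 1) ω‖ₑ ^ s) := fun ω => by
    rw [← ENNReal.mul_rpow_of_nonneg _ _ hs, ← ENNReal.mul_rpow_of_nonneg _ _ hs]
    refine ENNReal.rpow_le_rpow ?_ hs
    simpa only [enorm_eq_nnnorm, ← ENNReal.coe_mul, ENNReal.coe_le_coe] using hC₀ _ _
  have hPk := measurable_matProd (m := ⨆ i ∈ Set.Iic k, MeasurableSpace.comap
      (fun ω => (A i ω, B i ω)) inferInstance) (A := A) (n := k) fun i _ hik =>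
    measurable_iSup_comap_comp (show i ∈ Set.Iic k from hik) measurable_fst
  have hBk := measurable_iSup_comap_comp (X := fun n ω => (A n ω, B n ω))
    (Set.mem_singleton (k + 1)) measurable_snd
  have hprod : ∫⁻ ω, ‖matProd A k ω‖ₑ ^ s * ‖B (k + 1) ω‖ₑ ^ s ∂μ =
      (∫⁻ ω, ‖matProd A k ω‖ₑ ^ s ∂μ) * ∫⁻ ω, ‖B (k + 1) ω‖ₑ ^ s ∂μ :=
    hindep.lintegral_mul_eq_of_disjoint hmeas (by simp)
      ((measurable_enorm.pow_const s).comp hPk) ((measurable_enorm.pow_const s).comp hBk)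
  have hident_B : ∫⁻ ω, ‖B (k + 1) ω‖ₑ ^ s ∂μ = ∫⁻ ω, ‖B 1 ω‖ₑ ^ s ∂μ :=
    ((hident (k + 1)).comp ((measurable_enorm.pow_const s).comp measurable_snd)).lintegral_eq
  calc ∫⁻ ω, ‖matProd A k ω *ᵥ B (k + 1) ω‖ₑ ^ s ∂μ
      ≤ ∫⁻ ω, (C₀ : ℝ≥0∞) ^ s * (‖matProd A k ω‖ₑ ^ s * ‖B (k + 1) ω‖ₑ ^ s) ∂μ :=
        lintegral_mono hpoint
    _ = (C₀ : ℝ≥0∞) ^ s * ((∫⁻ ω, ‖matProd A k ω‖ₑ ^ s ∂μ) * ∫⁻ ω, ‖B 1 ω‖ₑ ^ s ∂μ) := by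
        rw [lintegral_const_mul' _ _ (ENNReal.rpow_ne_top_of_nonneg hs ENNReal.coe_ne_top),
          hprod, hident_B]
    _ = _ := by ring

end RandomMatrixProducts

theorem stmt6_general {d : ℕ} {Ω : Type*} [MeasureSpace Ω]
    [IsProbabilityMeasure (volume : Measure Ω)]
    (A : ℕ → Ω → Matrix (Fin d) (Fin d) ℝ) (B : ℕ → Ω → (Fin d → ℝ))
    (hinv : ∀ n, ∀ ω, IsUnit (A n ω))
    (hmeas : ∀ n, Measurable (fun ω => (A n ω, B n ω)))
    (hindep : iIndepFun (fun n ω => (A n ω, B n ω)) volume)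
    (hident : ∀ n, IdentDistrib (fun ω => (A n ω, B n ω)) (fun ω => (A 1 ω, B 1 ω))
      volume volume)
    (s : ℝ) (hs : 0 < s)
    (hb : (∫⁻ ω, (‖B 1 ω‖₊ : ℝ≥0∞) ^ s) < ⊤)
    (ks : ℝ≥0∞)
    (hks : Tendsto (fun n : ℕ =>
      (∫⁻ ω, (‖matProd A n ω‖₊ : ℝ≥0∞) ^ s) ^ (1 / (n : ℝ))) atTop (nhds ks))
    (hks1 : ks < 1)
    (Z : Ω → (Fin d → ℝ))
    (hZ : ∀ᵐ ω : Ω,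
      Tendsto (fun N : ℕ => ∑ k ∈ Finset.range N, (matProd A k ω).mulVec (B (k + 1) ω))
        atTop (nhds (Z ω))) :
    (∫⁻ ω, (‖Z ω‖₊ : ℝ≥0∞) ^ s) < ⊤ := by
  have hA : ∀ n, Measurable (A n) := fun n => (hmeas n).fst
  obtain ⟨r, hks_r, hr1⟩ := exists_between hks1
  have hdecay := ENNReal.eventually_le_pow_of_tendsto_rpow_inv hks hks_r
  have hfin : ∀ n, ∫⁻ ω, ‖matProd A n ω‖ₑ ^ s ≠ ⊤ := fun n => by
    obtain ⟨N, hN, hnN⟩ := (hdecay.and (eventually_ge_atTop n)).exists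
    exact lintegral_enorm_matProd_rpow_ne_top_of_le hA
      (hindep.comp (fun _ => Prod.fst) fun _ => measurable_fst) hinv hs.le hnN
      (ne_top_of_le_ne_top (ENNReal.pow_ne_top (hr1.trans ENNReal.one_lt_top).ne) hN)
  obtain ⟨C, hC, hterm⟩ :=
    exists_lintegral_enorm_matProd_mulVec_rpow_le hmeas hindep hident hs.le hb.ne
  refine (lintegral_enorm_rpow_ne_top_of_tendsto_sum hs (fun k => ?_) hZ ?_).lt_top
  · have hP : Measurable (matProd A k) := measurable_matProd fun i _ _ => hA i
    have hB : Measurable (B (k + 1)) := (hmeas (k + 1)).snd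
    exact (by fun_prop : Measurable fun ω => matProd A k ω *ᵥ B (k + 1) ω).aestronglyMeasurable
  · exact ENNReal.tsum_rpow_ne_top_of_eventually_le_geometric (by positivity)
      (fun k => ne_top_of_le_ne_top (ENNReal.mul_ne_top hC (hfin k)) (hterm k)) hC hr1
      (hdecay.mono fun k hk => (hterm k).trans (mul_le_mul_right hk C))

/-- Let `(a_n, b_n)` be i.i.d. with `E(‖b_1‖^s) < ∞` and suppose
`k(s) = lim_n (E‖a_1⋯a_n‖^s)^{1/n} < 1` for some `s > 0`. Then the stationary
solution `z = ∑_{k=0}^∞ a_1⋯a_k b_{k+1}` satisfies `E(‖z‖^s) < ∞`. -/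
theorem stmt6 {d : ℕ} {Ω : Type*} [MeasureSpace Ω]
    [IsProbabilityMeasure (volume : Measure Ω)]
    (A : ℕ → Ω → Matrix (Fin d) (Fin d) ℝ) (B : ℕ → Ω → (Fin d → ℝ))
    (hinv : ∀ n, ∀ ω, IsUnit (A n ω))
    (hmeas : ∀ n, Measurable (fun ω => (A n ω, B n ω)))
    (hindep : iIndepFun (fun n ω => (A n ω, B n ω)) volume)
    (hident : ∀ n, IdentDistrib (fun ω => (A n ω, B n ω)) (fun ω => (A 1 ω, B 1 ω))
      volume volume)
    (s : ℝ) (hs : 0 < s)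
    (hb : (∫⁻ ω, (‖B 1 ω‖₊ : ℝ≥0∞) ^ s) < ⊤)
    (ks : ℝ≥0∞)
    (hks : Tendsto (fun n : ℕ =>
      (∫⁻ ω, (‖matProd A n ω‖₊ : ℝ≥0∞) ^ s) ^ (1 / (n : ℝ))) atTop (nhds ks))
    (hks1 : ks < 1)
    (Z : Ω → (Fin d → ℝ)) (hZmeas : Measurable Z)
    (hZ : ∀ᵐ ω : Ω,
      Tendsto (fun N : ℕ => ∑ k ∈ Finset.range N, (matProd A k ω).mulVec (B (k + 1) ω))
        atTop (nhds (Z ω))) :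
    (∫⁻ ω, (‖Z ω‖₊ : ℝ≥0∞) ^ s) < ⊤ :=
  stmt6_general A B hinv hmeas hindep hident s hs hb ks hks hks1 Z hZ
end

section
/- Let ν be a probability measure on ℝ^d such that t^χ (δ_{t^{-1}} * ν) converges weakly (on continuous compactly supported functions on ℝ^d \ {0}) as t → +∞ to λ = ν_∞ ⊗ ℓ^χ, where ν_∞ is a finite measure on S^{d−1} and ℓ^χ(dt) = dt/t^{χ+1} on (0,∞). Then for any unit vector u with ν_∞({x ∈ S^{d−1}: ⟨u,x⟩ > 0}) > 0 and ν_∞({x : ⟨u,x⟩ = 0}) = 0, one has lim_{t→∞} t^χ ν({v : ⟨u,v⟩ ≥ t}) = (1/χ) ∫_{S^{d−1}} ⟨u,x⟩_+^χ dν_∞(x) > 0. -/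
/-!
Test the vague convergence against continuous cutoffs of the half-space `{⟪u, v⟫ ≥ 1}`.
A bump vanishing on `{⟪u, v⟫ ≤ 1}` bounds `t^χ ν{⟪u, v⟫ ≥ t}` from below; a bump equal to `1`
on `{⟪u, v⟫ ≥ 1, ‖v‖ ≤ m}` bounds it from above, up to the tail `t^χ ν{‖v‖ ≥ m t}`. That tail is
`O(m^(-χ))` uniformly in large `t`: testing against an annulus bump controls each dyadic shell
`{s ≤ ‖v‖ ≤ 2 s}` by `C s^(-χ)`, and these sum geometrically. As the edges of the bumps move to
`⟪u, v⟫ = 1` and `m → ∞`, dominated convergence along each ray and then over the sphere shows that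
both limits tend to `(1/χ) ∫ ⟪u, x⟫₊^χ dν_∞`; the ray through `x` crosses `⟪u, v⟫ = 1` at the single
radius `1 / ⟪u, x⟫`, which is `ℓ^χ`-null.
-/

open Filter MeasureTheory Set Topology
open scoped RealInnerProductSpace

noncomputable def ramp (a b s : ℝ) : ℝ := min 1 (max 0 ((s - a) / (b - a)))

lemma ramp_nonneg (a b s : ℝ) : 0 ≤ ramp a b s := le_min zero_le_one (le_max_left _ _)

lemma ramp_le_one (a b s : ℝ) : ramp a b s ≤ 1 := min_le_left _ _

lemma continuous_ramp (a b : ℝ) : Continuous (ramp a b) := by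
  unfold ramp
  fun_prop

lemma ramp_eq_zero {a b s : ℝ} (hab : a ≤ b) (hs : s ≤ a) : ramp a b s = 0 := by
  have : (s - a) / (b - a) ≤ 0 := div_nonpos_of_nonpos_of_nonneg (by linarith) (by linarith)
  simp [ramp, max_eq_left this]

lemma ramp_eq_one {a b s : ℝ} (hab : a < b) (hs : b ≤ s) : ramp a b s = 1 := by
  have : 1 ≤ (s - a) / (b - a) := (one_le_div (by linarith)).2 (by linarith)
  simp [ramp, max_eq_right (zero_le_one.trans this), min_eq_left this]

section Bump

variable {E : Type*} [NormedAddCommGroup E]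

noncomputable def bump (φ : E → ℝ) (a b m : ℝ) (v : E) : ℝ :=
  ramp a b (φ v) * (1 - ramp m (2 * m) ‖v‖)

variable {φ : E → ℝ} {a b m : ℝ}

lemma bump_nonneg (v : E) : 0 ≤ bump φ a b m v :=
  mul_nonneg (ramp_nonneg ..) (sub_nonneg.2 (ramp_le_one ..))

lemma bump_le_one (v : E) : bump φ a b m v ≤ 1 :=
  mul_le_one₀ (ramp_le_one ..) (sub_nonneg.2 (ramp_le_one ..)) (sub_le_self _ (ramp_nonneg ..))

lemma continuous_bump (hφ : Continuous φ) : Continuous (bump φ a b m) :=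
  ((continuous_ramp a b).comp hφ).mul
    (continuous_const.sub ((continuous_ramp m (2 * m)).comp continuous_norm))

lemma bump_eq_zero (hab : a ≤ b) {v : E} (hv : φ v ≤ a) : bump φ a b m v = 0 := by
  rw [bump, ramp_eq_zero hab hv, zero_mul]

lemma bump_eq_one (hab : a < b) (hm : 0 ≤ m) {v : E} (hφv : b ≤ φ v) (hv : ‖v‖ ≤ m) :
    bump φ a b m v = 1 := by
  rw [bump, ramp_eq_one hab hφv, ramp_eq_zero (by linarith) hv, sub_zero, one_mul]

lemma tsupport_bump_subset (hφ : Continuous φ) (hab : a ≤ b) (hm : 0 < m) :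
    tsupport (bump φ a b m) ⊆ {v | a ≤ φ v} ∩ Metric.closedBall 0 (2 * m) := by
  refine closure_minimal (fun v hv => ?_)
    ((isClosed_le continuous_const hφ).inter Metric.isClosed_closedBall)
  rw [Function.mem_support, bump, mul_ne_zero_iff] at hv
  refine ⟨not_lt.1 fun h => hv.1 (ramp_eq_zero hab h.le), ?_⟩
  rw [mem_closedBall_zero_iff]
  refine not_lt.1 fun h => hv.2 ?_
  rw [ramp_eq_one (by linarith) h.le, sub_self]

lemma hasCompactSupport_bump [ProperSpace E] (hφ : Continuous φ) (hab : a ≤ b) (hm : 0 < m) :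
    HasCompactSupport (bump φ a b m) :=
  (isCompact_closedBall 0 (2 * m)).of_isClosed_subset (isClosed_tsupport _)
    ((tsupport_bump_subset hφ hab hm).trans inter_subset_right)

lemma zero_notMem_tsupport_bump (hφ : Continuous φ) (hab : a ≤ b) (hm : 0 < m) (hφ0 : φ 0 < a) :
    (0 : E) ∉ tsupport (bump φ a b m) :=
  fun h => (tsupport_bump_subset hφ hab hm h).1.not_gt hφ0

end Bump

lemma tendsto_of_eventually_squeeze {ι α β : Type*} [TopologicalSpace β] [Preorder β]
    [OrderTopology β] {p : Filter ι} [p.NeBot] {l : Filter α} {F : α → β} {lo hi : ι → α → β}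
    {L U : ι → β} {y : β}
    (hlo : ∀ᶠ i in p, Tendsto (lo i) l (𝓝 (L i)) ∧ ∀ᶠ t in l, lo i t ≤ F t)
    (hhi : ∀ᶠ i in p, Tendsto (hi i) l (𝓝 (U i)) ∧ ∀ᶠ t in l, F t ≤ hi i t)
    (hL : Tendsto L p (𝓝 y)) (hU : Tendsto U p (𝓝 y)) : Tendsto F l (𝓝 y) := by
  refine tendsto_order.2 ⟨fun a ha => ?_, fun b hb => ?_⟩
  · obtain ⟨i, ⟨hlim, hle⟩, hLi⟩ := (hlo.and (hL.eventually (lt_mem_nhds ha))).exists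
    filter_upwards [hlim.eventually (lt_mem_nhds hLi), hle] with t h₁ h₂
    exact h₁.trans_le h₂
  · obtain ⟨i, ⟨hlim, hle⟩, hUi⟩ := (hhi.and (hU.eventually (gt_mem_nhds hb))).exists
    filter_upwards [hlim.eventually (gt_mem_nhds hUi), hle] with t h₁ h₂
    exact h₂.trans_lt h₁

section Measure

variable {α : Type*} [MeasurableSpace α] {μ : Measure α}

lemma integral_le_measureReal [IsFiniteMeasure μ] {f : α → ℝ} {s : Set α} (hf : ∀ x, f x ≤ 1)
    (hfs : ∀ x ∉ s, f x ≤ 0) : ∫ x, f x ∂μ ≤ μ.real s :=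
  (ENNReal.ofReal_le_iff_le_toReal (measure_ne_top μ s)).1
    (integral_le_measure (fun x _ => hf x) hfs)

lemma measureReal_le_integral {f : α → ℝ} {s : Set α} (hfi : Integrable f μ) (hf : 0 ≤ f)
    (hfs : ∀ x ∈ s, 1 ≤ f x) : μ.real s ≤ ∫ x, f x ∂μ :=
  ENNReal.toReal_le_of_le_ofReal (integral_nonneg hf)
    (hfi.measure_le_integral (Eventually.of_forall hf) hfs)

lemma measureReal_le_of_dyadic [IsFiniteMeasure μ] {g : α → ℝ} {χ C t₀ : ℝ} (hχ : 0 < χ)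
    (ht₀ : 0 < t₀)
    (h : ∀ s, t₀ ≤ s → μ.real {x | s ≤ g x ∧ g x ≤ 2 * s} ≤ C * s ^ (-χ)) {s : ℝ}
    (hs : t₀ ≤ s) : μ.real {x | s ≤ g x} ≤ C / (1 - 2 ^ (-χ)) * s ^ (-χ) := by
  have hs₀ : 0 < s := ht₀.trans_le hs
  set q : ℝ := 2 ^ (-χ)
  have hq₀ : 0 ≤ q := by positivity
  have hq₁ : q < 1 := Real.rpow_lt_one_of_one_lt_of_neg one_lt_two (neg_neg_of_pos hχ)
  have hcover : {x | s ≤ g x} ⊆ ⋃ k : ℕ, {x | 2 ^ k * s ≤ g x ∧ g x ≤ 2 * (2 ^ k * s)} := by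
    intro x hx
    obtain ⟨k, hk₁, hk₂⟩ := exists_nat_pow_near ((one_le_div hs₀).2 hx) one_lt_two
    refine mem_iUnion.2 ⟨k, (le_div_iff₀ hs₀).1 hk₁, ?_⟩
    rw [div_lt_iff₀ hs₀, pow_succ] at hk₂
    linarith
  have hshell (k : ℕ) : μ.real {x | 2 ^ k * s ≤ g x ∧ g x ≤ 2 * (2 ^ k * s)} ≤
      C * s ^ (-χ) * q ^ k := by
    refine (h _ (hs.trans (le_mul_of_one_le_left hs₀.le (one_le_pow₀ one_le_two)))).trans_eq ?_
    rw [Real.mul_rpow (by positivity) hs₀.le, ← Real.rpow_pow_comm zero_le_two]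
    ring
  have hC : 0 ≤ C * s ^ (-χ) := by simpa using measureReal_nonneg.trans (hshell 0)
  have hsum : Summable fun k : ℕ => C * s ^ (-χ) * q ^ k :=
    (summable_geometric_of_lt_one hq₀ hq₁).mul_left _
  refine ENNReal.toReal_le_of_le_ofReal
    (by rw [div_mul_eq_mul_div]; exact div_nonneg hC (by linarith)) ?_
  calc μ {x | s ≤ g x} ≤ ∑' k : ℕ, μ {x | 2 ^ k * s ≤ g x ∧ g x ≤ 2 * (2 ^ k * s)} :=
        (measure_mono hcover).trans (measure_iUnion_le _)
    _ ≤ ∑' k : ℕ, ENNReal.ofReal (C * s ^ (-χ) * q ^ k) :=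
        ENNReal.tsum_le_tsum fun k =>
          (ENNReal.le_ofReal_iff_toReal_le (measure_ne_top _ _) (by positivity)).2 (hshell k)
    _ = ENNReal.ofReal (C / (1 - q) * s ^ (-χ)) := by
        rw [← ENNReal.ofReal_tsum_of_nonneg (fun k => by positivity) hsum, tsum_mul_left,
          tsum_geometric_of_lt_one hq₀ hq₁]
        ring_nf

end Measure

section InnerProductSpace

variable {E : Type*} [NormedAddCommGroup E] [InnerProductSpace ℝ E] [MeasurableSpace E] {u : E}
  {ν : Measure E} [IsFiniteMeasure ν]

lemma integral_bump_inner_le {b m t : ℝ} (ht : 0 < t) (hb : 1 ≤ b) :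
    ∫ v, bump (inner ℝ u) 1 b m (t⁻¹ • v) ∂ν ≤ ν.real {v | t ≤ ⟪u, v⟫} := by
  refine integral_le_measureReal (fun _ => bump_le_one _) fun v hv => (bump_eq_zero hb ?_).le
  rw [real_inner_smul_right, inv_mul_le_iff₀ ht]
  simpa using (not_le.1 hv).le

variable [BorelSpace E]

lemma integrable_bump_comp_smul {φ : E → ℝ} {a b m : ℝ} (hφ : Continuous φ) (t : ℝ) :
    Integrable (fun v => bump φ a b m (t⁻¹ • v)) ν :=
  .of_bound ((continuous_bump hφ).comp (continuous_const_smul _)).aestronglyMeasurable 1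
    (ae_of_all _ fun v => by
      rw [Real.norm_of_nonneg (bump_nonneg _)]
      exact bump_le_one _)

lemma measureReal_le_integral_bump_inner_add {a m t : ℝ} (ht : 0 < t) (ha : a < 1)
    (hm : 0 ≤ m) :
    ν.real {v | t ≤ ⟪u, v⟫} ≤
      ∫ v, bump (inner ℝ u) a 1 m (t⁻¹ • v) ∂ν + ν.real {v | m * t ≤ ‖v‖} := by
  have hsplit : {v | t ≤ ⟪u, v⟫} ⊆ {v | t ≤ ⟪u, v⟫ ∧ ‖v‖ ≤ m * t} ∪ {v | m * t ≤ ‖v‖} :=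
    fun v hv => (le_total ‖v‖ (m * t)).imp (fun h => ⟨hv, h⟩) id
  refine (measureReal_mono hsplit).trans ((measureReal_union_le _ _).trans (add_le_add ?_ le_rfl))
  refine measureReal_le_integral (integrable_bump_comp_smul (by fun_prop) t)
    (fun _ => bump_nonneg _) fun v ⟨hv₁, hv₂⟩ => (bump_eq_one ha hm ?_ ?_).ge
  · rw [real_inner_smul_right, le_inv_mul_iff₀ ht]
    simpa using hv₁
  · rw [norm_smul, Real.norm_of_nonneg (inv_nonneg.2 ht.le), inv_mul_le_iff₀ ht, mul_comm]
    exact hv₂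

lemma measureReal_shell_le_integral_bump {t : ℝ} (ht : 0 < t) :
    ν.real {v | t ≤ ‖v‖ ∧ ‖v‖ ≤ 2 * t} ≤ ∫ v, bump (‖·‖) (1 / 2) 1 2 (t⁻¹ • v) ∂ν := by
  refine measureReal_le_integral (integrable_bump_comp_smul continuous_norm t)
    (fun _ => bump_nonneg _) fun v ⟨hv₁, hv₂⟩ => (bump_eq_one (by norm_num) zero_le_two ?_ ?_).ge
  all_goals rw [norm_smul, Real.norm_of_nonneg (inv_nonneg.2 ht.le)]
  · rwa [le_inv_mul_iff₀ ht, mul_one]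
  · rwa [inv_mul_le_iff₀ ht, mul_comm]

lemma exists_measureReal_norm_ge_le {χ L : ℝ} (hχ : 0 < χ)
    (h : Tendsto (fun t => t ^ χ * ∫ v, bump (‖·‖) (1 / 2) 1 2 (t⁻¹ • v) ∂ν) atTop (𝓝 L)) :
    ∃ C t₀, 0 < t₀ ∧ ∀ s, t₀ ≤ s → ν.real {v | s ≤ ‖v‖} ≤ C * s ^ (-χ) := by
  obtain ⟨t₁, ht₁⟩ := eventually_atTop.1 (h.eventually (eventually_le_nhds (lt_add_one L)))
  have ht₀ : 0 < max t₁ 1 := lt_max_of_lt_right one_pos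
  refine ⟨(L + 1) / (1 - 2 ^ (-χ)), _, ht₀, fun s => measureReal_le_of_dyadic hχ ht₀ fun s hs => ?_⟩
  have hs₀ : 0 < s := ht₀.trans_le hs
  rw [Real.rpow_neg hs₀.le, ← div_eq_mul_inv, le_div_iff₀' (by positivity)]
  exact (mul_le_mul_of_nonneg_left (measureReal_shell_le_integral_bump hs₀) (by positivity)).trans
    (ht₁ s ((le_max_left _ _).trans hs))

lemma rpow_mul_measureReal_le_integral_bump_add {χ C t₀ t ε : ℝ} (ht₀ : 0 < t₀)
    (htail : ∀ s, t₀ ≤ s → ν.real {v | s ≤ ‖v‖} ≤ C * s ^ (-χ)) (ht : t₀ ≤ t)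
    (hε : ε ∈ Ioo 0 1) :
    t ^ χ * ν.real {v | t ≤ ⟪u, v⟫} ≤
      t ^ χ * ∫ v, bump (inner ℝ u) (1 - ε) 1 ε⁻¹ (t⁻¹ • v) ∂ν + C * ε ^ χ := by
  obtain ⟨hε₀, hε₁⟩ := hε
  have ht' : 0 < t := ht₀.trans_le ht
  have hεt : t₀ ≤ ε⁻¹ * t := ht.trans (le_mul_of_one_le_left ht'.le ((one_le_inv₀ hε₀).2 hε₁.le))
  calc t ^ χ * ν.real {v | t ≤ ⟪u, v⟫}
      ≤ t ^ χ * (∫ v, bump (inner ℝ u) (1 - ε) 1 ε⁻¹ (t⁻¹ • v) ∂ν + C * (ε⁻¹ * t) ^ (-χ)) := by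
        have := measureReal_le_integral_bump_inner_add (ν := ν) (u := u) ht'
          (show 1 - ε < 1 by linarith) (inv_nonneg.2 hε₀.le)
        grw [this, htail _ hεt]
    _ = t ^ χ * ∫ v, bump (inner ℝ u) (1 - ε) 1 ε⁻¹ (t⁻¹ • v) ∂ν + C * ε ^ χ := by
        rw [Real.rpow_neg (by positivity), Real.mul_rpow (by positivity) ht'.le,
          Real.inv_rpow hε₀.le]
        have : 0 < t ^ χ := by positivity
        field_simp

end InnerProductSpace

lemma integrable_indicator_rpow {χ e : ℝ} (hχ : 0 < χ) (he : 0 < e) :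
    Integrable ((Ioi e).indicator fun r : ℝ => r ^ (-χ - 1)) (volume.restrict (Ioi 0)) :=
  ((integrableOn_Ioi_rpow_of_lt (by linarith) he).integrable_indicator measurableSet_Ioi).restrict

lemma setIntegral_indicator_rpow {χ e : ℝ} (hχ : 0 < χ) (he : 0 < e) :
    ∫ r in Ioi 0, (Ioi e).indicator (fun r : ℝ => r ^ (-χ - 1)) r = e⁻¹ ^ χ / χ := by
  rw [integral_indicator measurableSet_Ioi, Measure.restrict_restrict measurableSet_Ioi,
    Ioi_inter_Ioi, max_eq_left he.le, integral_Ioi_rpow_of_lt (by linarith) he, sub_add_cancel,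
    Real.inv_rpow he.le, ← Real.rpow_neg he.le, neg_div_neg_eq]

section Radial

variable {E : Type*} [NormedAddCommGroup E] [InnerProductSpace ℝ E] {u : E}

/-- The integral of `f` along the ray through `x` against `ℓ^χ(dr) = dr / r^(χ+1)`, so that
`∫ radialIntegral χ f dν_∞ = ∫ f d(ν_∞ ⊗ ℓ^χ)`. -/
noncomputable def radialIntegral (χ : ℝ) (f : E → ℝ) (x : E) : ℝ :=
  ∫ r in Ioi 0, f (r • x) / r ^ (χ + 1)

lemma radialIntegral_bump_inner_eq_zero {χ a b m : ℝ} {x : E} (ha : 0 ≤ a) (hab : a ≤ b)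
    (hx : ⟪u, x⟫ ≤ 0) : radialIntegral χ (bump (inner ℝ u) a b m) x = 0 :=
  setIntegral_eq_zero_of_forall_eq_zero fun r hr => by
    rw [bump_eq_zero hab (by rw [real_inner_smul_right]; nlinarith [mem_Ioi.1 hr]), zero_div]

lemma norm_bump_inner_smul_div_le {χ a b m r : ℝ} {x : E} (hx : 0 < ⟪u, x⟫) (ha : 1 / 2 ≤ a)
    (hab : a ≤ b) (hr : 0 < r) :
    ‖bump (inner ℝ u) a b m (r • x) / r ^ (χ + 1)‖ ≤
      (Ioi (2 * ⟪u, x⟫)⁻¹).indicator (fun r => r ^ (-χ - 1)) r := by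
  by_cases hrx : r ∈ Ioi (2 * ⟪u, x⟫)⁻¹
  · rw [indicator_of_mem hrx, norm_div, Real.norm_of_nonneg (bump_nonneg _),
      Real.norm_of_nonneg (by positivity), show -χ - 1 = -(χ + 1) by ring, Real.rpow_neg hr.le,
      ← one_div]
    gcongr
    exact bump_le_one _
  · rw [indicator_of_notMem hrx, bump_eq_zero hab, zero_div, norm_zero]
    rw [mem_Ioi, not_lt, ← one_div, le_div_iff₀ (by positivity)] at hrx
    rw [real_inner_smul_right]
    linarith

lemma norm_radialIntegral_bump_inner_le {χ a b m : ℝ} {x : E} (hχ : 0 < χ)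
    (hx : 0 < ⟪u, x⟫) (ha : 1 / 2 ≤ a) (hab : a ≤ b) :
    ‖radialIntegral χ (bump (inner ℝ u) a b m) x‖ ≤ (2 * ⟪u, x⟫) ^ χ / χ := by
  calc ‖radialIntegral χ (bump (inner ℝ u) a b m) x‖
      ≤ ∫ r in Ioi 0, (Ioi (2 * ⟪u, x⟫)⁻¹).indicator (fun r => r ^ (-χ - 1)) r :=
        norm_integral_le_of_norm_le (integrable_indicator_rpow hχ (by positivity))
          ((ae_restrict_mem measurableSet_Ioi).mono fun r hr =>
            norm_bump_inner_smul_div_le hx ha hab hr)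
    _ = (2 * ⟪u, x⟫) ^ χ / χ := by rw [setIntegral_indicator_rpow hχ (by positivity), inv_inv]

variable {ι : Type*} {l : Filter ι} {A B M : ι → ℝ}

lemma tendsto_bump_inner (hAB : ∀ᶠ i in l, A i < B i) (hA : Tendsto A l (𝓝 1))
    (hB : Tendsto B l (𝓝 1)) (hM : Tendsto M l atTop) {v : E} (hv : ⟪u, v⟫ ≠ 1) :
    Tendsto (fun i => bump (inner ℝ u) (A i) (B i) (M i) v) l
      (𝓝 ({w | 1 < ⟪u, w⟫}.indicator 1 v)) := by
  rcases hv.lt_or_gt with hv | hv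
  · rw [indicator_of_notMem (show v ∉ {w | 1 < ⟪u, w⟫} from not_lt.2 hv.le)]
    refine tendsto_const_nhds.congr' ?_
    filter_upwards [hAB, hA.eventually (eventually_ge_nhds hv)] with i hi hAi
    exact (bump_eq_zero hi.le hAi).symm
  · rw [indicator_of_mem (show v ∈ {w | 1 < ⟪u, w⟫} from hv), Pi.one_apply]
    refine tendsto_const_nhds.congr' ?_
    filter_upwards [hAB, hB.eventually (eventually_le_nhds hv), hM.eventually_ge_atTop ‖v‖]
      with i hi hBi hMi
    exact (bump_eq_one hi ((norm_nonneg v).trans hMi) hBi hMi).symm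

lemma tendsto_radialIntegral_bump_inner [l.IsCountablyGenerated] {χ : ℝ} (hχ : 0 < χ)
    (hAB : ∀ᶠ i in l, A i < B i) (hA : Tendsto A l (𝓝 1)) (hB : Tendsto B l (𝓝 1))
    (hM : Tendsto M l atTop) {x : E} (hx : 0 < ⟪u, x⟫) :
    Tendsto (fun i => radialIntegral χ (bump (inner ℝ u) (A i) (B i) (M i)) x) l
      (𝓝 (⟪u, x⟫ ^ χ / χ)) := by
  have hmeas : ∀ i, AEStronglyMeasurable
      (fun r : ℝ => bump (inner ℝ u) (A i) (B i) (M i) (r • x) / r ^ (χ + 1))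
      (volume.restrict (Ioi 0)) := fun i =>
    (((continuous_bump (by fun_prop)).comp (continuous_id.smul continuous_const)).measurable.div
      (measurable_id.pow_const _)).aestronglyMeasurable
  have hbound : ∀ᶠ i in l, ∀ᵐ r ∂volume.restrict (Ioi 0),
      ‖bump (inner ℝ u) (A i) (B i) (M i) (r • x) / r ^ (χ + 1)‖ ≤
        (Ioi (2 * ⟪u, x⟫)⁻¹).indicator (fun r => r ^ (-χ - 1)) r := by
    filter_upwards [hA.eventually (eventually_ge_nhds (by norm_num : (1 : ℝ) / 2 < 1)), hAB]
      with i hAi hABi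
    exact (ae_restrict_mem measurableSet_Ioi).mono fun r hr =>
      norm_bump_inner_smul_div_le hx hAi hABi.le hr
  have hlim : ∀ᵐ r ∂volume.restrict (Ioi 0),
      Tendsto (fun i => bump (inner ℝ u) (A i) (B i) (M i) (r • x) / r ^ (χ + 1)) l
        (𝓝 ((Ioi ⟪u, x⟫⁻¹).indicator (fun r => r ^ (-χ - 1)) r)) := by
    filter_upwards [ae_restrict_mem measurableSet_Ioi,
      ae_restrict_of_ae (Measure.ae_ne volume ⟪u, x⟫⁻¹)] with r hr hrx
    have hiff : r ∈ Ioi ⟪u, x⟫⁻¹ ↔ r • x ∈ {w | 1 < ⟪u, w⟫} := by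
      change _ < r ↔ 1 < ⟪u, r • x⟫
      rw [real_inner_smul_right, inv_lt_iff_one_lt_mul₀ hx]
    have hne : ⟪u, r • x⟫ ≠ 1 := by
      rw [real_inner_smul_right]
      exact fun h => hrx (eq_inv_of_mul_eq_one_left h)
    convert (tendsto_bump_inner hAB hA hB hM hne).div_const (r ^ (χ + 1)) using 2
    by_cases h : r ∈ Ioi ⟪u, x⟫⁻¹
    · rw [indicator_of_mem h, indicator_of_mem (hiff.1 h), Pi.one_apply, one_div,
        show -χ - 1 = -(χ + 1) by ring, Real.rpow_neg (le_of_lt hr)]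
    · rw [indicator_of_notMem h, indicator_of_notMem (hiff.not.1 h), zero_div]
  have key := tendsto_integral_filter_of_dominated_convergence _ (.of_forall hmeas) hbound
    (integrable_indicator_rpow hχ (by positivity)) hlim
  rwa [setIntegral_indicator_rpow hχ (inv_pos.2 hx), inv_inv] at key

end Radial

section LimitMeasure

variable {E : Type*} [NormedAddCommGroup E] [InnerProductSpace ℝ E] [MeasurableSpace E]
  [BorelSpace E] {u : E} {νinf : Measure E} [IsFiniteMeasure νinf] {χ : ℝ}

lemma integral_max_inner_rpow_pos (hχ : 0 < χ) (hsph : ∀ᵐ x ∂νinf, ‖x‖ = 1)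
    (hpos : νinf {x | 0 < ⟪u, x⟫} ≠ 0) : 0 < ∫ x, max ⟪u, x⟫ 0 ^ χ ∂νinf := by
  have hnonneg : 0 ≤ fun x => max ⟪u, x⟫ 0 ^ χ := fun x => by positivity
  have hint : Integrable (fun x => max ⟪u, x⟫ 0 ^ χ) νinf := by
    refine .of_bound (Continuous.aestronglyMeasurable (by fun_prop (disch := exact hχ.le)))
      (‖u‖ ^ χ) ?_
    filter_upwards [hsph] with x hx
    rw [Real.norm_of_nonneg (hnonneg x)]
    refine Real.rpow_le_rpow (le_max_right _ _) (max_le ?_ (norm_nonneg u)) hχ.le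
    simpa [hx] using real_inner_le_norm u x
  rw [integral_pos_iff_support_of_nonneg hnonneg hint]
  refine (pos_iff_ne_zero.2 hpos).trans_le (measure_mono fun x hx => ?_)
  exact (Real.rpow_pos_of_pos (lt_max_of_lt_left hx) χ).ne'

variable {ι : Type*} {l : Filter ι} [l.IsCountablyGenerated]
  {A B M : ι → ℝ}

lemma tendsto_integral_radialIntegral_bump_inner (hχ : 0 < χ) (hsph : ∀ᵐ x ∂νinf, ‖x‖ = 1)
    (hAB : ∀ᶠ i in l, A i < B i) (hA : Tendsto A l (𝓝 1))
    (hB : Tendsto B l (𝓝 1)) (hM : Tendsto M l atTop) :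
    Tendsto (fun i => ∫ x, radialIntegral χ (bump (inner ℝ u) (A i) (B i) (M i)) x ∂νinf) l
      (𝓝 ((1 / χ) * ∫ x, max ⟪u, x⟫ 0 ^ χ ∂νinf)) := by
  have hmeas (i : ι) : AEStronglyMeasurable
      (radialIntegral χ (bump (inner ℝ u) (A i) (B i) (M i))) νinf :=
    (StronglyMeasurable.integral_prod_right' (f := fun p : E × ℝ =>
      bump (inner ℝ u) (A i) (B i) (M i) (p.2 • p.1) / p.2 ^ (χ + 1))
      (((continuous_bump (by fun_prop)).comp (continuous_snd.smul continuous_fst)).measurable.div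
        (measurable_snd.pow_const _)).stronglyMeasurable).aestronglyMeasurable
  have hbound : ∀ᶠ i in l, ∀ᵐ x ∂νinf,
      ‖radialIntegral χ (bump (inner ℝ u) (A i) (B i) (M i)) x‖ ≤ (2 * ‖u‖) ^ χ / χ := by
    filter_upwards [hA.eventually (eventually_ge_nhds (by norm_num : (1 : ℝ) / 2 < 1)), hAB]
      with i hAi hABi
    filter_upwards [hsph] with x hx
    rcases le_or_gt ⟪u, x⟫ 0 with hneg | hpos
    · rw [radialIntegral_bump_inner_eq_zero (by linarith) hABi.le hneg, norm_zero]
      positivity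
    · refine (norm_radialIntegral_bump_inner_le hχ hpos hAi hABi.le).trans ?_
      gcongr
      simpa [hx] using real_inner_le_norm u x
  have hlim : ∀ᵐ x ∂νinf, Tendsto
      (fun i => radialIntegral χ (bump (inner ℝ u) (A i) (B i) (M i)) x) l
      (𝓝 (max ⟪u, x⟫ 0 ^ χ / χ)) := by
    refine ae_of_all _ fun x => ?_
    rcases le_or_gt ⟪u, x⟫ 0 with hneg | hpos
    · rw [max_eq_right hneg, Real.zero_rpow hχ.ne', zero_div]
      refine tendsto_const_nhds.congr' ?_
      filter_upwards [hA.eventually (eventually_ge_nhds one_pos), hAB] with i hAi hABi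
      exact (radialIntegral_bump_inner_eq_zero hAi hABi.le hneg).symm
    · rw [max_eq_left hpos.le]
      exact tendsto_radialIntegral_bump_inner hχ hAB hA hB hM hpos
  rw [one_div_mul_eq_div, ← integral_div]
  exact tendsto_integral_filter_of_dominated_convergence _ (.of_forall hmeas) hbound
    (integrable_const _) hlim

lemma tendsto_integral_radialIntegral_bump_inner_one_add (hχ : 0 < χ)
    (hsph : ∀ᵐ x ∂νinf, ‖x‖ = 1) :
    Tendsto (fun ε => ∫ x, radialIntegral χ (bump (inner ℝ u) 1 (1 + ε) ε⁻¹) x ∂νinf) (𝓝[>] 0)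
      (𝓝 ((1 / χ) * ∫ x, max ⟪u, x⟫ 0 ^ χ ∂νinf)) :=
  tendsto_integral_radialIntegral_bump_inner hχ hsph
    (eventually_nhdsWithin_of_forall fun _ hε => lt_add_of_pos_right 1 hε) tendsto_const_nhds
    (tendsto_nhdsWithin_of_tendsto_nhds (by simpa using (continuous_const_add (1 : ℝ)).tendsto 0))
    tendsto_inv_nhdsGT_zero

lemma tendsto_integral_radialIntegral_bump_inner_one_sub (hχ : 0 < χ)
    (hsph : ∀ᵐ x ∂νinf, ‖x‖ = 1) :
    Tendsto (fun ε => ∫ x, radialIntegral χ (bump (inner ℝ u) (1 - ε) 1 ε⁻¹) x ∂νinf) (𝓝[>] 0)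
      (𝓝 ((1 / χ) * ∫ x, max ⟪u, x⟫ 0 ^ χ ∂νinf)) :=
  tendsto_integral_radialIntegral_bump_inner hχ hsph
    (eventually_nhdsWithin_of_forall fun _ hε => sub_lt_self 1 hε)
    (tendsto_nhdsWithin_of_tendsto_nhds (by simpa using (continuous_sub_left (1 : ℝ)).tendsto 0))
    tendsto_const_nhds tendsto_inv_nhdsGT_zero

end LimitMeasure

theorem stmt17_general {d : ℕ} (χ : ℝ) (hχ : 0 < χ)
    (ν : Measure (EuclideanSpace ℝ (Fin d))) [IsProbabilityMeasure ν]
    (νinf : Measure (EuclideanSpace ℝ (Fin d))) [IsFiniteMeasure νinf]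
    (hsph : νinf (Metric.sphere (0 : EuclideanSpace ℝ (Fin d)) 1)ᶜ = 0)
    (hconv : ∀ f : EuclideanSpace ℝ (Fin d) → ℝ, Continuous f → HasCompactSupport f →
      (0 : EuclideanSpace ℝ (Fin d)) ∉ tsupport f →
      Tendsto (fun t : ℝ => t ^ χ * ∫ v, f (t⁻¹ • v) ∂ν) atTop
        (nhds (∫ x, (∫ r in Set.Ioi (0 : ℝ), f (r • x) / r ^ (χ + 1)) ∂νinf)))
    (u : EuclideanSpace ℝ (Fin d))
    (hpos : νinf {x | 0 < ⟪u, x⟫} ≠ 0) :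
    Tendsto (fun t : ℝ => t ^ χ * (ν {v | t ≤ ⟪u, v⟫}).toReal) atTop
      (nhds ((1 / χ) * ∫ x, (max ⟪u, x⟫ 0) ^ χ ∂νinf)) ∧
    0 < (1 / χ) * ∫ x, (max ⟪u, x⟫ 0) ^ χ ∂νinf := by
  have hsph' : ∀ᵐ x ∂νinf, ‖x‖ = 1 := measure_mono_null (fun x hx => by simpa using hx) hsph
  refine ⟨?_, by have := integral_max_inner_rpow_pos hχ hsph' hpos; positivity⟩
  have hbump {φ : EuclideanSpace ℝ (Fin d) → ℝ} {a b m : ℝ} (hφ : Continuous φ) (hφ₀ : φ 0 < a)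
      (hab : a ≤ b) (hm : 0 < m) :=
    hconv _ (continuous_bump hφ) (hasCompactSupport_bump hφ hab hm)
      (zero_notMem_tsupport_bump hφ hab hm hφ₀)
  obtain ⟨C, t₀, ht₀, htail⟩ := exists_measureReal_norm_ge_le hχ
    (hbump continuous_norm (by norm_num) (by norm_num) two_pos)
  have hsmall : ∀ᶠ ε in 𝓝[>] (0 : ℝ), ε ∈ Ioo 0 1 := Ioo_mem_nhdsGT one_pos
  have herror : Tendsto (fun ε : ℝ => C * ε ^ χ) (𝓝[>] 0) (𝓝 0) :=
    tendsto_nhdsWithin_of_tendsto_nhds <| by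
      simpa [Real.zero_rpow hχ.ne'] using ((Real.continuous_rpow_const hχ.le).tendsto 0).const_mul C
  have hinner : Continuous (inner ℝ u) := by fun_prop
  refine tendsto_of_eventually_squeeze
    (lo := fun ε t => t ^ χ * ∫ v, bump (inner ℝ u) 1 (1 + ε) ε⁻¹ (t⁻¹ • v) ∂ν)
    (hi := fun ε t => t ^ χ * ∫ v, bump (inner ℝ u) (1 - ε) 1 ε⁻¹ (t⁻¹ • v) ∂ν + C * ε ^ χ)
    ?_ ?_ (tendsto_integral_radialIntegral_bump_inner_one_add hχ hsph')
    (by simpa using (tendsto_integral_radialIntegral_bump_inner_one_sub hχ hsph').add herror)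
  · filter_upwards [hsmall] with ε hε
    refine ⟨hbump hinner (by simp) (by linarith [hε.1]) (inv_pos.2 hε.1), ?_⟩
    filter_upwards [eventually_gt_atTop 0] with t ht
    exact mul_le_mul_of_nonneg_left (integral_bump_inner_le ht (by linarith [hε.1]))
      (by positivity)
  · filter_upwards [hsmall] with ε hε
    refine ⟨(hbump hinner (by simpa using hε.2) (by linarith [hε.1])
      (inv_pos.2 hε.1)).add_const _, ?_⟩
    filter_upwards [eventually_ge_atTop t₀] with t ht
    exact rpow_mul_measureReal_le_integral_bump_add ht₀ htail ht hε

/-- If `t^χ (δ_{t⁻¹} * ν) → ν_∞ ⊗ ℓ^χ` weakly on compactly supported continuous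
functions on `ℝ^d \ {0}`, then for any unit vector `u` with
`ν_∞{x : ⟨u,x⟩ > 0} > 0` and `ν_∞{x : ⟨u,x⟩ = 0} = 0`, one has
`lim_t t^χ ν{v : ⟨u,v⟩ ≥ t} = (1/χ) ∫ ⟨u,x⟩₊^χ dν_∞(x) > 0`. -/
theorem stmt17 {d : ℕ} (χ : ℝ) (hχ : 0 < χ)
    (ν : Measure (EuclideanSpace ℝ (Fin d))) [IsProbabilityMeasure ν]
    (νinf : Measure (EuclideanSpace ℝ (Fin d))) [IsFiniteMeasure νinf]
    (hsph : νinf (Metric.sphere (0 : EuclideanSpace ℝ (Fin d)) 1)ᶜ = 0)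
    (hconv : ∀ f : EuclideanSpace ℝ (Fin d) → ℝ, Continuous f → HasCompactSupport f →
      (0 : EuclideanSpace ℝ (Fin d)) ∉ tsupport f →
      Tendsto (fun t : ℝ => t ^ χ * ∫ v, f (t⁻¹ • v) ∂ν) atTop
        (nhds (∫ x, (∫ r in Set.Ioi (0 : ℝ), f (r • x) / r ^ (χ + 1)) ∂νinf)))
    (u : EuclideanSpace ℝ (Fin d)) (hu : ‖u‖ = 1)
    (hpos : νinf {x | 0 < ⟪u, x⟫} ≠ 0)
    (hnull : νinf {x | ⟪u, x⟫ = 0} = 0) :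
    Tendsto (fun t : ℝ => t ^ χ * (ν {v | t ≤ ⟪u, v⟫}).toReal) atTop
      (nhds ((1 / χ) * ∫ x, (max ⟪u, x⟫ 0) ^ χ ∂νinf)) ∧
    0 < (1 / χ) * ∫ x, (max ⟪u, x⟫ 0) ^ χ ∂νinf :=
  stmt17_general χ hχ ν νinf hsph hconv u hpos
end
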